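/- Let r be a power of an odd prime p, q = r², write q − 1 = e·f, and set R = (r+1)/gcd(r+1, f). Suppose t·f is odd and 1 ≤ t ≤ R/2. Then t·f + 1 belongs to Σ(eg, q). -/

import Mathlib

open Finset

/-- Δ_S(a) = ∏_{b ∈ S, b ≠ a} (a − b). -/
def deltaS {F : Type*} [Field F] [DecidableEq F] (S : Finset F) (a : F) : F :=
  ∏ b ∈ S.erase a, (a - b)

/-- n ∈ Σ(eg,q): n is even, n ≥ 2, and there is S ⊆ F_q with |S| = n − 1 such that
η_q(−Δ_S(a)) = 1, i.e. −Δ_S(a) is a square, for all a ∈ S. -/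
def SigmaEG (F : Type*) [Field F] [DecidableEq F] (n : ℕ) : Prop :=
  Even n ∧ 2 ≤ n ∧ ∃ S : Finset F, S.card = n - 1 ∧
    ∀ a ∈ S, IsSquare (-(deltaS S a))

/-!
Take `S` to be the union of `t` cosets `G ^ j • μ_f` of the group of `f`-th roots of unity. Then
`∏_{y ∈ S} (X - y) = ∏_j (X ^ f - ξ ^ j)` with `ξ = G ^ f`, and since `Δ_S(x)` is the
derivative of this polynomial at `x`, `Δ_S(x) = f x ^ (f - 1) ∏_{j' ≠ j} (ξ ^ j - ξ ^ j')`
when `x ^ f = ξ ^ j`. In `F_{r²}` every element of `F_r`, in particular `-f`, is a square, and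
so is `x ^ (f - 1)` as `f` is odd. `G` can be chosen so that `ξ` lies in the subgroup of order
`(r + 1) / 2` and has order `(r + 1) / gcd(r + 1, f) / 2 ≥ t`. For `u ≠ w` in that subgroup
`(u - w) ^ (r - 1) = -(u w)⁻¹`, so all factors `ξ ^ j - ξ ^ j'` have the same quadratic
character `(-1) ^ ((r + 1) / 2)`, and there is an even number `t - 1` of them.
-/

open Polynomial

section DeltaS

variable {F : Type*} [Field F] [DecidableEq F]

theorem deltaS_eq_eval_derivative (S : Finset F) {x : F} (hx : x ∈ S) :
    deltaS S x = (derivative (∏ y ∈ S, (X - C y))).eval x := by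
  rw [prod_eq_multiset_prod, eval_multiset_prod_X_sub_C_derivative hx, deltaS,
    prod_eq_multiset_prod, erase_val]

theorem deltaS_eq_of_prod_X_sub_C_eq {ι : Type*} [DecidableEq ι] {S : Finset F} {s : Finset ι}
    {β : ι → F} {f : ℕ} (hS : ∏ y ∈ S, (X - C y) = ∏ j ∈ s, (X ^ f - C (β j)))
    {x : F} (hx : x ∈ S) {j₀ : ι} (hj₀ : j₀ ∈ s) (hxj : x ^ f = β j₀) :
    deltaS S x = f * x ^ (f - 1) * ∏ j ∈ s.erase j₀, (β j₀ - β j) := by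
  rw [deltaS_eq_eval_derivative S hx, hS, derivative_prod_finset, eval_finsetSum,
    sum_eq_single_of_mem j₀ hj₀]
  · simp only [derivative_sub, derivative_X_pow, map_natCast, derivative_C, sub_zero, eval_mul,
      eval_prod, eval_sub, eval_pow, eval_X, hxj, eval_C, eval_natCast]
    ring
  · intro j hj hne
    rw [eval_mul, eval_prod, prod_eq_zero (mem_erase.mpr ⟨Ne.symm hne, hj₀⟩), zero_mul]
    simp [hxj]

end DeltaS

section RootCosets

variable {F : Type*} [Field F] {ι : Type*}

def rootCosets [DecidableEq F] (ζ : F) (f : ℕ) (α : ι → F) (s : Finset ι) : Finset F :=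
  (s ×ˢ range f).image fun p => ζ ^ p.2 * α p.1

variable {ζ : F} {f : ℕ} {α : ι → F} {s : Finset ι}

theorem injOn_rootCosets (hζ : IsPrimitiveRoot ζ f) (hα : ∀ j ∈ s, α j ≠ 0)
    (hinj : Set.InjOn (fun j => α j ^ f) s) :
    Set.InjOn (fun p : ι × ℕ => ζ ^ p.2 * α p.1) (s ×ˢ range f : Finset _) := by
  rintro ⟨j, i⟩ hji ⟨j', i'⟩ hji' h
  simp only [coe_product, Set.mem_prod, mem_coe, mem_range] at hji hji' h
  have hj : j = j' := hinj hji.1 hji'.1 <| by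
    simpa [mul_pow, pow_right_comm _ _ f, hζ.pow_eq_one] using congrArg (· ^ f) h
  subst hj
  rw [mul_left_inj' (hα j hji.1)] at h
  rw [hζ.pow_inj hji.2 hji'.2 h]

variable [DecidableEq F]

theorem pow_eq_of_mem_rootCosets (hζ : IsPrimitiveRoot ζ f) {x : F}
    (hx : x ∈ rootCosets ζ f α s) : ∃ j ∈ s, x ^ f = α j ^ f := by
  obtain ⟨⟨j, i⟩, hji, rfl⟩ := mem_image.mp hx
  exact ⟨j, (mem_product.mp hji).1, by
    rw [mul_pow, pow_right_comm, hζ.pow_eq_one, one_pow, one_mul]⟩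

theorem card_rootCosets (hζ : IsPrimitiveRoot ζ f) (hα : ∀ j ∈ s, α j ≠ 0)
    (hinj : Set.InjOn (fun j => α j ^ f) s) : #(rootCosets ζ f α s) = #s * f := by
  rw [rootCosets, card_image_of_injOn (injOn_rootCosets hζ hα hinj), card_product,
    card_range]

theorem prod_X_sub_C_rootCosets (hζ : IsPrimitiveRoot ζ f) (hf : 0 < f)
    (hα : ∀ j ∈ s, α j ≠ 0) (hinj : Set.InjOn (fun j => α j ^ f) s) :
    ∏ y ∈ rootCosets ζ f α s, (X - C y) = ∏ j ∈ s, (X ^ f - C (α j ^ f)) := by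
  rw [rootCosets, prod_image (injOn_rootCosets hζ hα hinj), prod_product]
  exact prod_congr rfl fun j _ => (X_pow_sub_C_eq_prod hζ hf (rfl : α j ^ f = _)).symm

end RootCosets

section FieldOfSquareOrder

variable {F : Type*} [Fintype F] {r h : ℕ}

theorem sq_eq_two_mul_add_one (hrh : r + 1 = 2 * h) : r ^ 2 = 2 * ((r - 1) * h) + 1 := by
  obtain ⟨r, rfl⟩ : ∃ r', r = r' + 1 := ⟨r - 1, by omega⟩
  rw [Nat.add_sub_cancel, ← mul_assoc, mul_comm 2, mul_assoc, ← hrh]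
  ring

theorem card_div_two_eq (hF : Fintype.card F = r ^ 2) (hrh : r + 1 = 2 * h) :
    Fintype.card F / 2 = (r - 1) * h := by
  rw [hF, sq_eq_two_mul_add_one hrh]
  omega

variable [Field F]

theorem ringChar_ne_two (hF : Fintype.card F = r ^ 2) (hrh : r + 1 = 2 * h) : ringChar F ≠ 2 := by
  rw [FiniteField.even_card_iff_char_two.ne, hF, sq_eq_two_mul_add_one hrh]
  omega

theorem isSquare_of_pow_eq_self (hF : Fintype.card F = r ^ 2) (hrh : r + 1 = 2 * h) {x : F}
    (hx : x ^ r = x) : IsSquare x := by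
  rcases eq_or_ne x 0 with rfl | hx0
  · exact ⟨0, by simp⟩
  have hx1 : x ^ (r - 1) = 1 := by
    apply mul_right_cancel₀ hx0
    rw [← pow_succ, Nat.sub_add_cancel (by omega), hx, one_mul]
  rw [FiniteField.isSquare_iff (ringChar_ne_two hF hrh) hx0, card_div_two_eq hF hrh, pow_mul, hx1,
    one_pow]

variable {p m : ℕ} [ExpChar F p]

theorem sub_pow_card_div_two_eq_neg_one_pow (hF : Fintype.card F = r ^ 2) (hrh : r + 1 = 2 * h)
    (hr : r = p ^ m) {u w : F} (hu : u ^ h = 1) (hw : w ^ h = 1) (huw : u ≠ w) :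
    (u - w) ^ (Fintype.card F / 2) = (-1) ^ h := by
  have hinv : ∀ {v : F}, v ^ h = 1 → v ^ r = v⁻¹ := fun {v} hv => by
    refine eq_inv_of_mul_eq_one_right ?_
    rw [← pow_succ', hrh, pow_mul', hv, one_pow]
  have h0 : ∀ {v : F}, v ^ h = 1 → v ≠ 0 := fun hv h0 => by
    rw [h0, zero_pow (by omega)] at hv; exact zero_ne_one hv
  have hc : u - w ≠ 0 := sub_ne_zero.mpr huw
  have hcr : (u - w) ^ (r - 1) = -(u * w)⁻¹ := by
    apply mul_right_cancel₀ hc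
    rw [← pow_succ, Nat.sub_add_cancel (by omega), hr, sub_pow_expChar_pow, ← hr, hinv hu,
      hinv hw]
    field_simp [h0 hu, h0 hw]
    ring
  rw [card_div_two_eq hF hrh, pow_mul, hcr, neg_pow, inv_pow, mul_pow, hu, hw]
  simp

theorem isSquare_prod_erase_sub (hF : Fintype.card F = r ^ 2) (hrh : r + 1 = 2 * h)
    (hr : r = p ^ m) {ι : Type*} [DecidableEq ι] {s : Finset ι} (hs : Odd #s) {β : ι → F}
    (hβ : Set.InjOn β s) (hβh : ∀ j ∈ s, β j ^ h = 1) {j₀ : ι} (hj₀ : j₀ ∈ s) :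
    IsSquare (∏ j ∈ s.erase j₀, (β j₀ - β j)) := by
  have hne : ∀ j ∈ s.erase j₀, β j₀ ≠ β j := fun j hj h =>
    (mem_erase.mp hj).1 (hβ (mem_erase.mp hj).2 hj₀ h.symm)
  have hchar : ∀ j ∈ s.erase j₀, (β j₀ - β j) ^ (Fintype.card F / 2) = (-1) ^ h := fun j hj =>
    sub_pow_card_div_two_eq_neg_one_pow hF hrh hr (hβh j₀ hj₀) (hβh j (mem_erase.mp hj).2)
      (hne j hj)
  rw [FiniteField.isSquare_iff (ringChar_ne_two hF hrh)
      (prod_ne_zero_iff.mpr fun j hj => sub_ne_zero.mpr (hne j hj)),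
    ← prod_pow, prod_congr rfl hchar, prod_const, card_erase_of_mem hj₀, ← pow_mul, mul_comm,
    pow_mul, (Nat.Odd.sub_odd hs odd_one).neg_one_pow, one_pow]

end FieldOfSquareOrder

section Construction

variable {F : Type*} [Field F] [Fintype F] [DecidableEq F] {r h p m : ℕ} [ExpChar F p]

theorem exists_card_eq_forall_isSquare_neg_deltaS (hF : Fintype.card F = r ^ 2)
    (hrh : r + 1 = 2 * h) (hr : r = p ^ m) {ζ G : F} {f t : ℕ} (hζ : IsPrimitiveRoot ζ f)
    (hf : Odd f) (hG : (G ^ f) ^ h = 1) (ht : Odd t) (htG : t ≤ orderOf (G ^ f)) :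
    ∃ S : Finset F, #S = t * f ∧ ∀ x ∈ S, IsSquare (-deltaS S x) := by
  have hG0 : G ≠ 0 := by
    rintro rfl
    rw [zero_pow hf.pos.ne', zero_pow (by omega)] at hG
    exact zero_ne_one hG
  have hα : ∀ j ∈ range t, G ^ j ≠ 0 := fun j _ => pow_ne_zero j hG0
  have hβ : ∀ j, (G ^ j) ^ f = (G ^ f) ^ j := fun j => pow_right_comm G j f
  have hinj : Set.InjOn (fun j => (G ^ j) ^ f) (range t) := by
    intro i hi j hj hij
    simp only [hβ] at hij
    rw [coe_range, Set.mem_Iio] at hi hj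
    exact pow_injOn_Iio_orderOf (hi.trans_le htG) (hj.trans_le htG) hij
  refine ⟨rootCosets ζ f (G ^ ·) (range t), by rw [card_rootCosets hζ hα hinj, card_range],
    fun x hx => ?_⟩
  obtain ⟨j, hj, hxj⟩ := pow_eq_of_mem_rootCosets hζ hx
  rw [deltaS_eq_of_prod_X_sub_C_eq (prod_X_sub_C_rootCosets hζ hf.pos hα hinj) hx hj hxj,
    neg_mul_eq_neg_mul, neg_mul_eq_neg_mul]
  have hfr : (-(f : F)) ^ r = -f := by
    rw [hr, ← iterateFrobenius_def, map_neg, map_natCast]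
  refine ((isSquare_of_pow_eq_self hF hrh hfr).mul
    ((Nat.Odd.sub_odd hf odd_one).isSquare_pow x)).mul
    (isSquare_prod_erase_sub hF hrh hr (by rwa [card_range]) hinj (fun j _ => ?_) hj)
  rw [hβ, pow_right_comm, hG, one_pow]

end Construction

theorem FiniteField.exists_isPrimitiveRoot_card_sub_one (F : Type*) [Field F] [Fintype F] :
    ∃ ω : F, IsPrimitiveRoot ω (Fintype.card F - 1) := by
  classical
  obtain ⟨g, hg⟩ := IsCyclic.exists_ofOrder_eq_natCard (α := Fˣ)
  refine ⟨g, ?_⟩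
  rw [← Fintype.card_units, ← Nat.card_eq_fintype_card, ← hg, ← orderOf_units]
  exact IsPrimitiveRoot.orderOf _

theorem exists_isPrimitiveRoot_pow_of_card_eq_sq {F : Type*} [Field F] [Fintype F] {r h f : ℕ}
    (hF : Fintype.card F = r ^ 2) (hrh : r + 1 = 2 * h) (hf : Odd f) (hfr : f ∣ r ^ 2 - 1) :
    ∃ ζ G : F, IsPrimitiveRoot ζ f ∧ (G ^ f) ^ h = 1 ∧
      orderOf (G ^ f) = (r + 1) / Nat.gcd (r + 1) f / 2 := by
  set d := Nat.gcd (r + 1) f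
  have hd : Odd d := hf.of_dvd_nat (Nat.gcd_dvd_right _ _)
  obtain ⟨R, hR⟩ : 2 * d ∣ r + 1 :=
    Nat.Coprime.mul_dvd_of_dvd_of_dvd (Nat.coprime_two_left.mpr hd) ⟨h, hrh⟩
      (Nat.gcd_dvd_left _ _)
  have hN : r ^ 2 - 1 = (r - 1) * (r + 1) := by
    rw [mul_comm, ← Nat.sq_sub_sq, one_pow]
  obtain ⟨k, hk⟩ : f ∣ (r - 1) * d := by
    have := dvd_mul_gcd_of_dvd_mul (hN ▸ hfr)
    rwa [gcd_eq_nat_gcd, Nat.gcd_comm] at this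
  obtain ⟨ω, hω⟩ := FiniteField.exists_isPrimitiveRoot_card_sub_one F
  rw [hF] at hω
  have hNpos : 0 < r ^ 2 - 1 := by
    have := hF ▸ Fintype.one_lt_card (α := F)
    omega
  have hξ : IsPrimitiveRoot ((ω ^ (2 * k)) ^ f) R := by
    rw [← pow_mul]
    refine hω.pow hNpos ?_
    calc r ^ 2 - 1 = 2 * ((r - 1) * d) * R := by rw [hN, hR]; ring
      _ = 2 * k * f * R := by rw [hk]; ring
  obtain ⟨e, he⟩ := hfr
  refine ⟨ω ^ e, ω ^ (2 * k), hω.pow hNpos (by rw [he, mul_comm]), ?_, ?_⟩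
  · have hhR : h = R * d := by
      rw [mul_comm R]
      linarith
    rw [hhR, pow_mul, hξ.pow_eq_one, one_pow]
  · rw [← hξ.eq_orderOf, hR, Nat.div_div_eq_div_mul, mul_comm 2 d,
      Nat.mul_div_cancel_left _ (by positivity)]

theorem stmt_12_general (p m : ℕ) (hp : p.Prime) (hodd : p ≠ 2)
    (r : ℕ) (hr : r = p ^ m)
    (F : Type*) [Field F] [Fintype F] [DecidableEq F] (hF : Fintype.card F = r ^ 2)
    (e f t : ℕ) (hef : r ^ 2 - 1 = e * f)
    (htf : Odd (t * f)) (ht2 : t ≤ (r + 1) / Nat.gcd (r + 1) f / 2) :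
    SigmaEG F (t * f + 1) := by
  obtain ⟨ht, hf⟩ := Nat.odd_mul.mp htf
  have := Fact.mk hp
  have : CharP F p := charP_of_card_eq_prime_pow (hF.trans (by rw [hr, ← pow_mul]))
  obtain ⟨h, hrh⟩ : ∃ h, r + 1 = 2 * h :=
    (hr ▸ (hp.odd_of_ne_two hodd).pow : Odd r).add_one.two_dvd
  obtain ⟨ζ, G, hζ, hG, hGord⟩ :=
    exists_isPrimitiveRoot_pow_of_card_eq_sq hF hrh hf (hef ▸ dvd_mul_left f e)
  obtain ⟨S, hcard, hsq⟩ :=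
    exists_card_eq_forall_isSquare_neg_deltaS hF hrh hr hζ hf hG ht (hGord ▸ ht2)
  exact ⟨htf.add_one, by have := htf.pos; omega, S, by rw [hcard, Nat.add_sub_cancel], hsq⟩

theorem stmt_12 (p m : ℕ) (hp : p.Prime) (hodd : p ≠ 2) (hm : 0 < m)
    (r : ℕ) (hr : r = p ^ m)
    (F : Type*) [Field F] [Fintype F] [DecidableEq F] (hF : Fintype.card F = r ^ 2)
    (e f t : ℕ) (hef : r ^ 2 - 1 = e * f)
    (htf : Odd (t * f)) (ht1 : 1 ≤ t) (ht2 : t ≤ (r + 1) / Nat.gcd (r + 1) f / 2) :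
    SigmaEG F (t * f + 1) :=
  stmt_12_general p m hp hodd r hr F hF e f t hef htf ht2
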